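/- If two values P(t₁) and P(t₂) of the corrected divergence curve are known at distinct times t₁ ≠ t₂ (both > 0), then the parameters μ > 0 and h₀ ∈ [0,(r-1)/r) are uniquely determined; i.e., the map (μ,h₀) ↦ (P(t₁),P(t₂)) is injective. -/

import Mathlib

/-! Subtracting the limit `(r-1)/r` leaves a pure exponential `(h₀ - (r-1)/r) e^{-λt}` with
`λ = rμ/(r-1)`. Its values at two distinct times determine `λ` (from their ratio, as the amplitude
is nonzero) and then the amplitude, hence `μ` and `h₀`. -/

open Real

theorem eq_of_mul_exp_neg_mul_eq_at_two_points {a a' l l' t₁ t₂ : ℝ} (ha : a ≠ 0)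
    (ht : t₁ ≠ t₂) (h₁ : a * exp (-(l * t₁)) = a' * exp (-(l' * t₁)))
    (h₂ : a * exp (-(l * t₂)) = a' * exp (-(l' * t₂))) : l = l' ∧ a = a' := by
  have ha' : a' ≠ 0 := by
    rintro rfl
    simp [ha, exp_ne_zero] at h₁
  -- Cross-multiplying the two equations eliminates the amplitudes.
  have hcross : exp (-(l * t₁) + -(l' * t₂)) = exp (-(l' * t₁) + -(l * t₂)) := by
    rw [exp_add, exp_add]
    apply mul_left_cancel₀ (mul_ne_zero ha ha')
    linear_combination (a' * exp (-(l' * t₂))) * h₁ - (a' * exp (-(l' * t₁))) * h₂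
  have hrate : (l - l') * (t₂ - t₁) = 0 := by linear_combination exp_injective hcross
  have hl : l = l' :=
    sub_eq_zero.mp ((mul_eq_zero.mp hrate).resolve_right (sub_ne_zero.mpr ht.symm))
  subst hl
  exact ⟨rfl, mul_right_cancel₀ (exp_ne_zero _) h₁⟩

/-- The corrected divergence curve `P_{μ,h₀}(t)`, with `r` taken real. -/
noncomputable def divergenceCurve (r μ h₀ t : ℝ) : ℝ :=
  h₀ * exp (-(r * μ * t) / (r - 1)) + ((r - 1) / r) * (1 - exp (-(r * μ * t) / (r - 1)))

theorem divergenceCurve_sub_limit (r μ h₀ t : ℝ) :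
    divergenceCurve r μ h₀ t - (r - 1) / r = (h₀ - (r - 1) / r) * exp (-(r / (r - 1) * μ * t)) := by
  have hexponent : -(r * μ * t) / (r - 1) = -(r / (r - 1) * μ * t) := by ring
  rw [divergenceCurve, hexponent]
  ring

theorem divergenceCurve_injective {r μ μ' h₀ h₀' t₁ t₂ : ℝ} (hr₀ : r ≠ 0) (hr₁ : r ≠ 1)
    (hh₀ : h₀ ≠ (r - 1) / r) (ht : t₁ ≠ t₂)
    (h₁ : divergenceCurve r μ h₀ t₁ = divergenceCurve r μ' h₀' t₁)
    (h₂ : divergenceCurve r μ h₀ t₂ = divergenceCurve r μ' h₀' t₂) : μ = μ' ∧ h₀ = h₀' := by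
  have hk : r / (r - 1) ≠ 0 := div_ne_zero hr₀ (sub_ne_zero.mpr hr₁)
  have hsub (t : ℝ) (h : divergenceCurve r μ h₀ t = divergenceCurve r μ' h₀' t) :
      (h₀ - (r - 1) / r) * exp (-(r / (r - 1) * μ * t))
        = (h₀' - (r - 1) / r) * exp (-(r / (r - 1) * μ' * t)) := by
    rw [← divergenceCurve_sub_limit, ← divergenceCurve_sub_limit, h]
  obtain ⟨hrate, hamp⟩ :=
    eq_of_mul_exp_neg_mul_eq_at_two_points (sub_ne_zero.mpr hh₀) ht (hsub t₁ h₁) (hsub t₂ h₂)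
  exact ⟨mul_left_cancel₀ hk hrate, sub_left_inj.mp hamp⟩

theorem stmt_16_general (r : ℕ) (hr : 2 ≤ r) (t₁ t₂ : ℝ) (ht : t₁ < t₂)
    (μ μ' h₀ h₀' : ℝ)
    (hh1 : h₀ < (r - 1) / r)
    (h1 : h₀ * Real.exp (-(r * μ * t₁) / (r - 1))
        + ((r - 1) / r) * (1 - Real.exp (-(r * μ * t₁) / (r - 1)))
      = h₀' * Real.exp (-(r * μ' * t₁) / (r - 1))
        + ((r - 1) / r) * (1 - Real.exp (-(r * μ' * t₁) / (r - 1))))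
    (h2 : h₀ * Real.exp (-(r * μ * t₂) / (r - 1))
        + ((r - 1) / r) * (1 - Real.exp (-(r * μ * t₂) / (r - 1)))
      = h₀' * Real.exp (-(r * μ' * t₂) / (r - 1))
        + ((r - 1) / r) * (1 - Real.exp (-(r * μ' * t₂) / (r - 1)))) :
    μ = μ' ∧ h₀ = h₀' := by
  have hr' : (2 : ℝ) ≤ r := by exact_mod_cast hr
  exact divergenceCurve_injective (by positivity) (by linarith) hh1.ne ht.ne h1 h2

theorem stmt_16 (r : ℕ) (hr : 2 ≤ r) (t₁ t₂ : ℝ) (ht₁ : 0 < t₁) (ht : t₁ < t₂)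
    (μ μ' h₀ h₀' : ℝ) (hμ : 0 < μ) (hμ' : 0 < μ')
    (hh0 : 0 ≤ h₀) (hh1 : h₀ < (r - 1) / r)
    (hh0' : 0 ≤ h₀') (hh1' : h₀' < (r - 1) / r)
    (h1 : h₀ * Real.exp (-(r * μ * t₁) / (r - 1))
        + ((r - 1) / r) * (1 - Real.exp (-(r * μ * t₁) / (r - 1)))
      = h₀' * Real.exp (-(r * μ' * t₁) / (r - 1))
        + ((r - 1) / r) * (1 - Real.exp (-(r * μ' * t₁) / (r - 1))))
    (h2 : h₀ * Real.exp (-(r * μ * t₂) / (r - 1))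
        + ((r - 1) / r) * (1 - Real.exp (-(r * μ * t₂) / (r - 1)))
      = h₀' * Real.exp (-(r * μ' * t₂) / (r - 1))
        + ((r - 1) / r) * (1 - Real.exp (-(r * μ' * t₂) / (r - 1)))) :
    μ = μ' ∧ h₀ = h₀' :=
  stmt_16_general r hr t₁ t₂ ht μ μ' h₀ h₀' hh1 h1 h2
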